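/- If there exists ρ ∈ ℝ such that P_0 + ρ AᵀA ⪰ 0, then for every pair (x, X) with X symmetric, X ⪰ x xᵀ, Ax = b, and AX = b xᵀ, one has tr(P_0 X) ≥ xᵀ P_0 x. -/

import Mathlib

/-! With `M := X - x xᵀ ⪰ 0`, the constraints give `A M = 0`, so
`tr(P₀ M) = tr((P₀ + ρ AᵀA) M)`, which is nonnegative as the trace of a product of two
positive semidefinite matrices. -/

open Matrix

namespace Matrix

variable {n : Type*} [Fintype n]

theorem trace_mul_vecMulVec {R : Type*} [CommSemiring R] (P : Matrix n n R) (u v : n → R) :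
    (P * vecMulVec u v).trace = v ⬝ᵥ P *ᵥ u := by
  rw [mul_vecMulVec, trace_vecMulVec, dotProduct_comm]

open scoped ComplexOrder

variable {𝕜 : Type*} [RCLike 𝕜]

theorem PosSemidef.trace_mul_nonneg {P Q : Matrix n n 𝕜} (hP : P.PosSemidef)
    (hQ : Q.PosSemidef) : 0 ≤ (P * Q).trace := by
  obtain ⟨k, v, rfl⟩ := posSemidef_iff_eq_sum_vecMulVec.mp hQ
  rw [Finset.mul_sum, trace_sum]
  exact Finset.sum_nonneg fun i _ ↦ by
    rw [trace_mul_vecMulVec]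
    exact hP.dotProduct_mulVec_nonneg (v i)

theorem trace_mul_nonneg_of_add_posSemidef {P K M : Matrix n n 𝕜}
    (hPK : (P + K).PosSemidef) (hM : M.PosSemidef) (hKM : K * M = 0) :
    0 ≤ (P * M).trace := by
  simpa [add_mul, hKM] using hPK.trace_mul_nonneg hM

end Matrix

theorem trace_ge_quadForm_of_finsler_general {n m : ℕ}
    (P0 : Matrix (Fin n) (Fin n) ℝ)
    (A : Matrix (Fin m) (Fin n) ℝ) (b : Fin m → ℝ)
    (ρ : ℝ) (hρ : (P0 + ρ • (Aᵀ * A)).PosSemidef)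
    (x : Fin n → ℝ) (X : Matrix (Fin n) (Fin n) ℝ)
    (hrelax : (X - Matrix.vecMulVec x x).PosSemidef)
    (hAx : A.mulVec x = b) (hAX : A * X = Matrix.vecMulVec b x) :
    x ⬝ᵥ P0.mulVec x ≤ (P0 * X).trace := by
  have hAM : A * (X - vecMulVec x x) = 0 := by
    rw [Matrix.mul_sub, hAX, mul_vecMulVec, hAx, sub_self]
  have hgap : 0 ≤ (P0 * (X - vecMulVec x x)).trace :=
    trace_mul_nonneg_of_add_posSemidef hρ hrelax (by
      rw [Matrix.smul_mul, Matrix.mul_assoc, hAM, Matrix.mul_zero, smul_zero])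
  rw [Matrix.mul_sub, trace_sub, trace_mul_vecMulVec] at hgap
  linarith

/-- If `P₀ + ρ AᵀA ⪰ 0` for some `ρ`, then `tr(P₀ X) ≥ xᵀ P₀ x` for every pair
`(x, X)` with `X` symmetric, `X ⪰ x xᵀ`, `Ax = b` and `AX = b xᵀ`. -/
theorem trace_ge_quadForm_of_finsler {n m : ℕ}
    (P0 : Matrix (Fin n) (Fin n) ℝ) (hP0 : P0.IsSymm)
    (A : Matrix (Fin m) (Fin n) ℝ) (b : Fin m → ℝ)
    (ρ : ℝ) (hρ : (P0 + ρ • (Aᵀ * A)).PosSemidef)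
    (x : Fin n → ℝ) (X : Matrix (Fin n) (Fin n) ℝ) (hX : X.IsSymm)
    (hrelax : (X - Matrix.vecMulVec x x).PosSemidef)
    (hAx : A.mulVec x = b) (hAX : A * X = Matrix.vecMulVec b x) :
    x ⬝ᵥ P0.mulVec x ≤ (P0 * X).trace :=
  trace_ge_quadForm_of_finsler_general P0 A b ρ hρ x X hrelax hAx hAX
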